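/- Let G be a Lie group acting smoothly, effectively and regularly on an n-dimensional manifold M with all orbits of dimension q, and assume κ(TM) and κ(Vert M) are vector sub-bundles. If there exists a nowhere-vanishing G-invariant vertical q-chain χ on M, then A^q(g,G_x) ≠ 0 for every x ∈ M. -/

import Mathlib

open scoped Manifold
open Manifold

noncomputable section

namespace GInvariant

/-! ### Raw differential forms and vector fields on a manifold charted on `EuclideanSpace ℝ (Fin n)` -/

/-- A raw `k`-form on `M`: at each point, a real-valued function of `k` tangent vectors
(the tangent space of a manifold modelled on `EuclideanSpace ℝ (Fin n)` is definitionally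
`EuclideanSpace ℝ (Fin n)`). -/
abbrev RawForm (n : ℕ) (M : Type*) (k : ℕ) : Type _ :=
  M → (Fin k → EuclideanSpace ℝ (Fin n)) → ℝ

/-- A raw form is a genuine (pointwise alternating multilinear) differential form. -/
def IsForm {n : ℕ} {M : Type*} {k : ℕ} (ω : RawForm n M k) : Prop :=
  ∀ x : M, ∃ β : AlternatingMap ℝ (EuclideanSpace ℝ (Fin n)) ℝ (Fin k), ⇑β = ω x

/-- A vector field on `M`. -/
abbrev VF (n : ℕ) (M : Type*) : Type _ := M → EuclideanSpace ℝ (Fin n)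

variable {n m p q k r : ℕ} {M : Type*} [TopologicalSpace M]
  [ChartedSpace (EuclideanSpace ℝ (Fin n)) M] [IsManifold (𝓡 n) (⊤ : ℕ∞) M]

/-- Smoothness of a vector field, as a section of the tangent bundle. -/
def IsSmoothVF (X : VF n M) : Prop :=
  ContMDiff (𝓡 n) ((𝓡 n).tangent) (⊤ : ℕ∞) (fun x => (⟨x, X x⟩ : TangentBundle (𝓡 n) M))

/-- Smoothness of a vector field on a set. -/
def IsSmoothVFOn (X : VF n M) (U : Set M) : Prop :=
  ContMDiffOn (𝓡 n) ((𝓡 n).tangent) (⊤ : ℕ∞) (fun x => (⟨x, X x⟩ : TangentBundle (𝓡 n) M)) U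

/-- The pullback of a raw form to the model space through the chart at `x₀`. -/
def chartPullback (x₀ : M) (ω : RawForm n M k) :
    EuclideanSpace ℝ (Fin n) → (Fin k → EuclideanSpace ℝ (Fin n)) → ℝ :=
  fun y v => ω ((chartAt (EuclideanSpace ℝ (Fin n)) x₀).symm y)
    (fun i => mfderiv (𝓡 n) (𝓡 n) ((chartAt (EuclideanSpace ℝ (Fin n)) x₀).symm) y (v i))

/-- A raw form is smooth on `U` if it is pointwise alternating and its local expressions in
charts are smooth. -/
def IsSmoothFormOn (ω : RawForm n M k) (U : Set M) : Prop :=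
  IsForm ω ∧ ∀ x₀ ∈ U, ∀ v : Fin k → EuclideanSpace ℝ (Fin n),
    ContDiffOn ℝ (⊤ : ℕ∞) (fun y => chartPullback x₀ ω y v)
      ((chartAt (EuclideanSpace ℝ (Fin n)) x₀).target ∩
        (chartAt (EuclideanSpace ℝ (Fin n)) x₀).symm ⁻¹' U)

/-- A raw form is smooth if it is so on all of `M`. -/
def IsSmoothForm (ω : RawForm n M k) : Prop := IsSmoothFormOn ω Set.univ

/-- The exterior derivative of a `k`-form on the model vector space, via the standard
`fderiv`-antisymmetrization formula. -/
def rawExtDeriv {E : Type*} [NormedAddCommGroup E] [NormedSpace ℝ E]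
    (ω : E → (Fin k → E) → ℝ) : E → (Fin (k + 1) → E) → ℝ :=
  fun y v => ∑ i : Fin (k + 1),
    (-1 : ℝ) ^ (i : ℕ) * fderiv ℝ (fun z => ω z (i.removeNth v)) y (v i)

/-- The exterior derivative of a raw form on a manifold, computed in the chart at each point
(for smooth forms this is the usual exterior derivative). -/
def extDeriv (ω : RawForm n M k) : RawForm n M (k + 1) :=
  fun x v => rawExtDeriv (chartPullback x ω)
    (chartAt (EuclideanSpace ℝ (Fin n)) x x)
    (fun i => (mfderiv (𝓡 n) (𝓡 n) (chartAt (EuclideanSpace ℝ (Fin n)) x) x (v i) :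
      EuclideanSpace ℝ (Fin n)))

/-- The Lie bracket of two vector fields on a manifold, computed in charts. -/
def mLieBracket (X Y : VF n M) : VF n M := fun x =>
  mfderiv (𝓡 n) (𝓡 n) ((chartAt (EuclideanSpace ℝ (Fin n)) x).symm)
    (chartAt (EuclideanSpace ℝ (Fin n)) x x)
    (VectorField.lieBracket (E := EuclideanSpace ℝ (Fin n)) ℝ
      (fun y => (mfderiv (𝓡 n) (𝓡 n) (chartAt (EuclideanSpace ℝ (Fin n)) x)
        ((chartAt (EuclideanSpace ℝ (Fin n)) x).symm y)
        (X ((chartAt (EuclideanSpace ℝ (Fin n)) x).symm y)) : EuclideanSpace ℝ (Fin n)))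
      (fun y => (mfderiv (𝓡 n) (𝓡 n) (chartAt (EuclideanSpace ℝ (Fin n)) x)
        ((chartAt (EuclideanSpace ℝ (Fin n)) x).symm y)
        (Y ((chartAt (EuclideanSpace ℝ (Fin n)) x).symm y)) : EuclideanSpace ℝ (Fin n)))
      (chartAt (EuclideanSpace ℝ (Fin n)) x x))

/-- The wedge product of raw forms. -/
def rawWedge {l : ℕ} (α : RawForm n M k) (β : RawForm n M l) : RawForm n M (k + l) :=
  fun x v => ((k.factorial * l.factorial : ℕ) : ℝ)⁻¹ *
    ∑ σ : Equiv.Perm (Fin (k + l)), ((Equiv.Perm.sign σ : ℤ) : ℝ) *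
      α x (fun i => v (σ (Fin.castAdd l i))) * β x (fun j => v (σ (Fin.natAdd k j)))


/-! ### Lie group actions -/

section Action

variable {p m : ℕ}
variable {G : Type*} [TopologicalSpace G] [ChartedSpace (EuclideanSpace ℝ (Fin p)) G]
  [Group G] [LieGroup (𝓡 p) (⊤ : ℕ∞) G]
variable {Q : Type*} [TopologicalSpace Q] [ChartedSpace (EuclideanSpace ℝ (Fin m)) Q]
  [IsManifold (𝓡 m) (⊤ : ℕ∞) Q]
variable [MulAction G M]

variable (G M) in
/-- A smooth and effective action of a Lie group `G` on a manifold `M`. -/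
structure IsSmoothEffectiveAction : Prop where
  smooth : ContMDiff ((𝓡 p).prod (𝓡 n)) (𝓡 n) (⊤ : ℕ∞) (fun z : G × M => z.1 • z.2)
  effective : ∀ g : G, (∀ x : M, g • x = x) → g = 1

variable (G) in
/-- The differential `(μ_g)_* : T_xM → T_{gx}M` of the action of `g`
(tangent spaces are definitionally `EuclideanSpace ℝ (Fin n)`). -/
def dAct (g : G) (x : M) : EuclideanSpace ℝ (Fin n) →L[ℝ] EuclideanSpace ℝ (Fin n) :=
  mfderiv (𝓡 n) (𝓡 n) (fun y : M => g • y) x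

variable (G) in
/-- The infinitesimal generator of the action associated to `v ∈ T_1G`. -/
def genVF (v : EuclideanSpace ℝ (Fin p)) : VF n M :=
  fun x => (mfderiv (𝓡 p) (𝓡 n) (fun g : G => g • x) (1 : G) v : EuclideanSpace ℝ (Fin n))

variable (G) in
/-- `X` is an infinitesimal generator of the action of `G` on `M`. -/
def IsInfGen (X : VF n M) : Prop := ∃ v : EuclideanSpace ℝ (Fin p), X = genVF G v

variable (G) in
/-- The action of `G` on `M` has all orbits of dimension `q`. -/
def OrbitsHaveDim (q : ℕ) : Prop :=
  ∀ x : M, Module.finrank ℝ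
    (LinearMap.range (mfderiv (𝓡 p) (𝓡 n) (fun g : G => g • x) (1 : G)).toLinearMap) = q

/-- A `G`-invariant vector field. -/
def IsInvariantVF (G : Type*) [TopologicalSpace G] [ChartedSpace (EuclideanSpace ℝ (Fin p)) G]
    [Group G] [LieGroup (𝓡 p) (⊤ : ℕ∞) G] [MulAction G M] (X : VF n M) : Prop :=
  ∀ (g : G) (x : M), dAct G g x (X x) = X (g • x)

variable (G) in
/-- A `G`-invariant raw form on a subset `U`. -/
def IsInvariantFormOn (ω : RawForm n M k) (U : Set M) : Prop :=
  ∀ (g : G), ∀ x ∈ U, ∀ v : Fin k → EuclideanSpace ℝ (Fin n),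
    ω (g • x) (fun i => dAct G g x (v i)) = ω x v

variable (G) in
/-- A `G`-invariant raw form. -/
def IsInvariantForm (ω : RawForm n M k) : Prop := IsInvariantFormOn G ω Set.univ

variable (G) in
/-- `κ(T_xM)`: the fixed set of the linear isotropy representation of `G_x` on `T_xM`. -/
def isoFix (x : M) : Submodule ℝ (EuclideanSpace ℝ (Fin n)) :=
  ⨅ g ∈ MulAction.stabilizer G x,
    LinearMap.eqLocus (dAct G g x).toLinearMap (ContinuousLinearMap.id ℝ (EuclideanSpace ℝ (Fin n))).toLinearMap

/-- The vertical space at `x` of a map `π : M → Q`, i.e. `ker (π_*)_x`. -/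
def vertSp (π : M → Q) (x : M) : Submodule ℝ (EuclideanSpace ℝ (Fin n)) :=
  LinearMap.ker (mfderiv (𝓡 n) (𝓡 m) π x).toLinearMap

variable (G) in
/-- `κ(Vert_xM)`: the `G_x`-fixed vectors among vertical ones. -/
def isoFixVert (π : M → Q) (x : M) : Submodule ℝ (EuclideanSpace ℝ (Fin n)) :=
  isoFix G x ⊓ vertSp (m := m) π x

/-- A family of subspaces of the tangent spaces of `M` is a (smooth, constant rank) vector
sub-bundle: locally it is spanned by finitely many pointwise independent smooth vector fields. -/
def IsSubbundle (V : ∀ _ : M, Submodule ℝ (EuclideanSpace ℝ (Fin n))) : Prop :=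
  ∃ r : ℕ, ∀ x₀ : M, ∃ U : Set M, IsOpen U ∧ x₀ ∈ U ∧ ∃ s : Fin r → VF n M,
    (∀ i, IsSmoothVFOn (s i) U) ∧ ∀ x ∈ U,
      LinearIndependent ℝ (fun i => s i x) ∧
      V x = Submodule.span ℝ (Set.range fun i => s i x)

variable (G) in
/-- `π : M → Q` realizes `Q` as the orbit manifold `M/G` of a regular action:
it is a smooth surjective submersion whose fibers are exactly the `G`-orbits, and the
vertical spaces are spanned by the infinitesimal generators of the action. -/
structure IsRegularQuotient (π : M → Q) : Prop where
  smooth : ContMDiff (𝓡 n) (𝓡 m) (⊤ : ℕ∞) π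
  surj : Function.Surjective π
  submersion : ∀ x : M, Function.Surjective (mfderiv (𝓡 n) (𝓡 m) π x)
  fibers : ∀ x y : M, π x = π y ↔ ∃ g : G, g • x = y
  vert_eq : ∀ x : M, vertSp (m := m) π x =
    LinearMap.range (mfderiv (𝓡 p) (𝓡 n) (fun g : G => g • x) (1 : G)).toLinearMap

/-- The pullback of a raw form along `π : M → Q`. -/
def pullbackForm (π : M → Q) (η : RawForm m Q k) : RawForm n M k :=
  fun x v => η (π x) (fun i => (mfderiv (𝓡 n) (𝓡 m) π x (v i) : EuclideanSpace ℝ (Fin m)))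


/-! ### Vertical multivector `q`-chains and the evaluation map `ρ_χ` -/

/-- A field of multivectors on `M` (a chain). -/
abbrev QChain (n : ℕ) (M : Type*) : Type _ :=
  M → ExteriorAlgebra ℝ (EuclideanSpace ℝ (Fin n))

/-- A smooth vertical `q`-chain on `U`: a section of `Λ_q(Vert M)`, locally of the form
`J·X₁∧⋯∧X_q` with `J` smooth and `Xᵢ` smooth vertical vector fields. -/
def IsVertQChainOn (π : M → Q) (q : ℕ) (χ : QChain n M) (U : Set M) : Prop :=
  ∀ x₀ ∈ U, ∃ V : Set M, IsOpen V ∧ x₀ ∈ V ∧ V ⊆ U ∧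
    ∃ (J : M → ℝ) (s : Fin q → VF n M),
      ContMDiffOn (𝓡 n) 𝓘(ℝ, ℝ) (⊤ : ℕ∞) J V ∧ (∀ i, IsSmoothVFOn (s i) V) ∧
      (∀ i, ∀ x ∈ V, s i x ∈ vertSp (m := m) π x) ∧
      ∀ x ∈ V, χ x = J x • ExteriorAlgebra.ιMulti ℝ q (fun i => s i x)

/-- A smooth vertical `q`-chain on all of `M`. -/
def IsVertQChain (π : M → Q) (q : ℕ) (χ : QChain n M) : Prop :=
  IsVertQChainOn (m := m) π q χ Set.univ

/-- A nowhere vanishing chain on `U`. -/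
def NowhereVanishingOn (χ : QChain n M) (U : Set M) : Prop := ∀ x ∈ U, χ x ≠ 0

variable (G) in
/-- A `G`-invariant chain on `U` : `(μ_g)_* χ_x = χ_{gx}`. -/
def IsInvariantQChainOn (χ : QChain n M) (U : Set M) : Prop :=
  ∀ (g : G), ∀ x ∈ U, ExteriorAlgebra.map (dAct (n := n) G g x).toLinearMap (χ x) = χ (g • x)

variable (G) in
/-- A `G`-invariant chain. -/
def IsInvariantQChain (χ : QChain n M) : Prop := IsInvariantQChainOn G χ Set.univ

/-- `θ = ι_χ ω` on `U`: the interior evaluation of the `(q+k)`-form `ω` on the `q`-chain `χ`,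
`(ι_χ ω)(Y₁,…,Y_k) = ω(χ, Y₁,…,Y_k)`. -/
def IsContractionOfOn (q : ℕ) (χ : QChain n M) (ω : RawForm n M (q + k))
    (θ : RawForm n M k) (U : Set M) : Prop :=
  ∀ x ∈ U, ∀ v : Fin q → EuclideanSpace ℝ (Fin n),
    χ x = ExteriorAlgebra.ιMulti ℝ q v →
      ∀ w : Fin k → EuclideanSpace ℝ (Fin n), θ x w = ω x (Fin.append v w)

/-- `ρ = ρ_χ(ω)` on `U` : the `(k)`-form on the quotient with
`π^*((-1)^{(n-(q+k))q} ρ) = ι_χ ω`. -/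
def IsRhoOfOn (π : M → Q) (q : ℕ) (χ : QChain n M) (ω : RawForm n M (q + k))
    (ρ : RawForm m Q k) (U : Set M) : Prop :=
  ∃ θ : RawForm n M k, IsContractionOfOn q χ ω θ U ∧
    ∀ x ∈ U, ∀ v : Fin k → EuclideanSpace ℝ (Fin n),
      θ x v = (-1 : ℝ) ^ ((n - (q + k)) * q) *
        ρ (π x) (fun i => (mfderiv (𝓡 n) (𝓡 m) π x (v i) : EuclideanSpace ℝ (Fin m)))

variable (G) in
/-- `ρ_χ : Ω^*(U)^G → Ω^{*-q}(U/G)` is a cochain map : `ρ_χ(dω) = d(ρ_χ ω)` for every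
`G`-invariant form `ω`. -/
def RhoIsCochainOn (π : M → Q) (q : ℕ) (χ : QChain n M) (U : Set M) : Prop :=
  ∀ (k : ℕ) (ω : RawForm n M (q + k)), IsSmoothFormOn ω U → IsInvariantFormOn G ω U →
    ∀ (ρ : RawForm m Q k) (ρd : RawForm m Q (k + 1)),
      IsRhoOfOn π q χ ω ρ U → IsRhoOfOn (k := k + 1) π q χ (extDeriv ω) ρd U →
      ∀ y ∈ π '' U, ∀ w : Fin (k + 1) → EuclideanSpace ℝ (Fin m), ρd y w = extDeriv ρ y w

variable (G) in
/-- `ρ_χ` as a cochain map on all of `M`. -/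
def RhoIsCochain (π : M → Q) (q : ℕ) (χ : QChain n M) : Prop :=
  RhoIsCochainOn (m := m) G π q χ Set.univ

/-- `ξ = L_R χ` : the Lie derivative of the `q`-chain `χ` along the vector field `R`,
characterized on local decompositions `χ = J·s₁∧⋯∧s_q` by the Leibniz formula
`L_R χ = R(J)·s₁∧⋯∧s_q + J·∑ᵢ s₁∧⋯∧[R,sᵢ]∧⋯∧s_q`. -/
def IsLieDerOf (q : ℕ) (R : VF n M) (χ ξ : QChain n M) : Prop :=
  ∀ V : Set M, IsOpen V → ∀ (J : M → ℝ) (s : Fin q → VF n M),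
    ContMDiffOn (𝓡 n) 𝓘(ℝ, ℝ) (⊤ : ℕ∞) J V → (∀ i, IsSmoothVFOn (s i) V) →
    (∀ x ∈ V, χ x = J x • ExteriorAlgebra.ιMulti ℝ q (fun i => s i x)) →
    ∀ x ∈ V, ξ x =
      HSMul.hSMul (α := ℝ) (mfderiv (𝓡 n) 𝓘(ℝ, ℝ) J x (R x) : ℝ) (ExteriorAlgebra.ιMulti ℝ q (fun i => s i x))
      + J x • ∑ i : Fin q, ExteriorAlgebra.ιMulti ℝ q
          (Function.update (fun j => s j x) i (mLieBracket R (s i) x))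

/-! ### The Lie algebra of `G`, relative forms and relative Lie algebra cohomology -/

variable (G) in
/-- The left invariant vector field on `G` generated by `v ∈ T_1G`. -/
def leftInvVF (v : EuclideanSpace ℝ (Fin p)) : VF p G :=
  fun y => (mfderiv (𝓡 p) (𝓡 p) (fun z : G => y * z) (1 : G) v : EuclideanSpace ℝ (Fin p))

variable (G) in
/-- The Lie bracket on `𝔤 = T_1G`, via left invariant vector fields. -/
def gBracket (v w : EuclideanSpace ℝ (Fin p)) : EuclideanSpace ℝ (Fin p) :=
  mLieBracket (leftInvVF G v) (leftInvVF G w) (1 : G)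

variable (G) in
/-- The adjoint action of `g ∈ G` on `𝔤 = T_1G` (differential of conjugation at `1`). -/
def AdAct (g : G) : EuclideanSpace ℝ (Fin p) →L[ℝ] EuclideanSpace ℝ (Fin p) :=
  mfderiv (𝓡 p) (𝓡 p) (fun z : G => g * z * g⁻¹) (1 : G)

/-- The Lie algebra (tangent set at `1`) of a subgroup-like subset `K ⊆ G`. -/
def subgroupLieAlg (K : Set G) : Set (EuclideanSpace ℝ (Fin p)) :=
  {v | ∃ γ : ℝ → G, ContMDiff 𝓘(ℝ, ℝ) (𝓡 p) (⊤ : ℕ∞) γ ∧ γ 0 = 1 ∧ (∀ t : ℝ, γ t ∈ K) ∧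
    (mfderiv 𝓘(ℝ, ℝ) (𝓡 p) γ 0 (1 : ℝ) : EuclideanSpace ℝ (Fin p)) = v}

variable (G) in
/-- The space `A^r(𝔤, K)` of `K`-relative `r`-forms on `𝔤` : alternating `r`-forms
annihilated by insertion of elements of the Lie algebra of `K` and invariant under the
co-adjoint action of `K`. -/
def relForm (K : Set G) (r : ℕ) : Set ((Fin r → EuclideanSpace ℝ (Fin p)) → ℝ) :=
  {α | (∃ β : AlternatingMap ℝ (EuclideanSpace ℝ (Fin p)) ℝ (Fin r), ⇑β = α) ∧
    (∀ v ∈ subgroupLieAlg K, ∀ w : Fin r → EuclideanSpace ℝ (Fin p),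
      (∃ i, w i = v) → α w = 0) ∧
    (∀ g ∈ K, ∀ w : Fin r → EuclideanSpace ℝ (Fin p),
      α (fun i => AdAct G g (w i)) = α w)}

/-- The Chevalley–Eilenberg differential (for trivial coefficients) associated to a
bracket `br`, as a raw operation on `r`-multilinear functions:
`(dα)(v₀,…,v_r) = ∑_{i<j} (-1)^{i+j} α([vᵢ,vⱼ], v₀,…,v̂ᵢ,…,v̂ⱼ,…,v_r)`. -/
def ceDiff {L : Type*} (br : L → L → L) :
    ∀ {r : ℕ}, ((Fin r → L) → ℝ) → (Fin (r + 1) → L) → ℝ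
  | 0, _ => fun _ => 0
  | (r + 1), α => fun v => ∑ j : Fin (r + 2), ∑ i : Fin (r + 2),
      if h : (i : ℕ) < (j : ℕ) then
        (-1 : ℝ) ^ ((i : ℕ) + (j : ℕ)) *
          α (Fin.cons (br (v i) (v j))
            (Fin.removeNth (⟨(i : ℕ), by have := j.isLt; omega⟩ : Fin (r + 1))
              (Fin.removeNth j v)))
      else 0

variable (G) in
/-- `α` is a coboundary in the `K`-relative Chevalley–Eilenberg complex. -/
def IsRelCoboundary (K : Set G) (br : EuclideanSpace ℝ (Fin p) → EuclideanSpace ℝ (Fin p) →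
    EuclideanSpace ℝ (Fin p)) {r : ℕ} (α : (Fin r → EuclideanSpace ℝ (Fin p)) → ℝ) : Prop :=
  ∃ (r' : ℕ) (h : r = r' + 1), ∃ β ∈ relForm G K r',
    ∀ w : Fin r → EuclideanSpace ℝ (Fin p),
      α w = ceDiff br β (fun i => w (Fin.cast h.symm i))

variable (G) in
/-- Nontriviality of the relative Lie algebra cohomology `H^r(𝔤, K)` : there is a relative
cocycle which is not a relative coboundary. -/
def relCohomNonzero (K : Set G) (br : EuclideanSpace ℝ (Fin p) → EuclideanSpace ℝ (Fin p) →
    EuclideanSpace ℝ (Fin p)) (r : ℕ) : Prop :=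
  ∃ α ∈ relForm G K r, (∀ w, ceDiff br α w = 0) ∧ ¬ IsRelCoboundary G K br α

end Action

set_option maxHeartbeats 1000000
set_option synthInstance.maxHeartbeats 400000

/-- Auxiliary: any `q` vectors lying in a subspace with a `q`-element basis give a wedge
proportional to the wedge of the basis vectors. -/
lemma top_wedge_aux {E : Type*} [AddCommGroup E] [Module ℝ E] {q : ℕ}
    (V : Submodule ℝ E) (B : Module.Basis (Fin q) ℝ V) (v : Fin q → E) (hv : ∀ i, v i ∈ V) :
    ∃ c : ℝ, ExteriorAlgebra.ιMulti ℝ q v =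
      c • ExteriorAlgebra.ιMulti ℝ q (fun i => (B i : E)) := by
  classical
  let f : V [⋀^Fin q]→ₗ[ℝ] ExteriorAlgebra ℝ E :=
    (ExteriorAlgebra.ιMulti ℝ q).compLinearMap V.subtype
  let gmap : V [⋀^Fin q]→ₗ[ℝ] ExteriorAlgebra ℝ E :=
    (LinearMap.toSpanSingleton ℝ _
      (ExteriorAlgebra.ιMulti ℝ q (fun i => (B i : E)))).compAlternatingMap B.det
  have hfg : f = gmap := by
    refine Module.Basis.ext_alternating B fun idx hinj => ?_
    let σ : Equiv.Perm (Fin q) := Equiv.ofBijective idx (Finite.injective_iff_bijective.1 hinj)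
    have h1 : (fun i => B (idx i)) = ⇑B ∘ ⇑σ := rfl
    show f (fun i => B (idx i)) = gmap (fun i => B (idx i))
    rw [h1, AlternatingMap.map_perm, AlternatingMap.map_perm]
    congr 1
    show ExteriorAlgebra.ιMulti ℝ q (fun i => (B i : E)) =
      B.det ⇑B • ExteriorAlgebra.ιMulti ℝ q (fun i => (B i : E))
    rw [Module.Basis.det_self, one_smul]
  refine ⟨B.det (fun i => ⟨v i, hv i⟩), ?_⟩
  have h2 : f (fun i => ⟨v i, hv i⟩) = gmap (fun i => ⟨v i, hv i⟩) := by rw [hfg]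
  exact h2

/-- If there is a nowhere-vanishing `G`-invariant vertical `q`-chain on `M`
then `A^q(𝔤, G_x) ≠ 0` for every `x ∈ M`. -/
theorem statement_6
    {p n m : ℕ} {G : Type*} [TopologicalSpace G]
    [ChartedSpace (EuclideanSpace ℝ (Fin p)) G] [Group G] [LieGroup (𝓡 p) (⊤ : ℕ∞) G]
    {M : Type*} [TopologicalSpace M] [ChartedSpace (EuclideanSpace ℝ (Fin n)) M]
    [IsManifold (𝓡 n) (⊤ : ℕ∞) M] [MulAction G M]
    {Q : Type*} [TopologicalSpace Q] [ChartedSpace (EuclideanSpace ℝ (Fin m)) Q]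
    [IsManifold (𝓡 m) (⊤ : ℕ∞) Q] (π : M → Q)
    (hact : IsSmoothEffectiveAction (p := p) (n := n) M G) (hreg : IsRegularQuotient (p := p) (n := n) (m := m) G π)
    (q : ℕ) (horb : OrbitsHaveDim (p := p) (n := n) (M := M) G q)
    (hbTM : IsSubbundle (n := n) (fun x : M => isoFix (n := n) G x))
    (hbV : IsSubbundle (n := n) (fun x : M => isoFixVert (n := n) (m := m) G π x))
    (χ : QChain n M) (hχ : IsVertQChain (m := m) π q χ)
    (hnv : NowhereVanishingOn χ Set.univ) (hχinv : IsInvariantQChain G χ) :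
    ∀ x : M, ∃ α ∈ relForm (p := p) G ((MulAction.stabilizer G x : Subgroup G) : Set G) q,
      α ≠ (fun _ => 0) := by
  intro x
  classical
  rcases Nat.eq_zero_or_pos q with hq0 | hqpos
  · subst hq0
    refine ⟨fun _ => (1 : ℝ),
      ⟨⟨AlternatingMap.constOfIsEmpty ℝ (EuclideanSpace ℝ (Fin p)) (Fin 0) (1 : ℝ), rfl⟩,
        ?_, ?_⟩, ?_⟩
    · rintro v - w ⟨i, -⟩; exact i.elim0
    · intro g _ w; rfl
    · intro h
      exact one_ne_zero (congrFun h (fun i => i.elim0))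
  haveI : Nonempty (Fin q) := ⟨⟨0, hqpos⟩⟩
  -- data of the chain at `x`
  obtain ⟨V, hVopen, hxV, -, J, s, hJ, hs, hsvert, hdec⟩ := hχ x (Set.mem_univ x)
  have hχx : χ x = J x • ExteriorAlgebra.ιMulti ℝ q (fun i => s i x) := hdec x hxV
  have hχx0 : χ x ≠ 0 := hnv x (Set.mem_univ x)
  have hJx : J x ≠ 0 := by
    intro h; exact hχx0 (by rw [hχx, h, zero_smul])
  set W : ExteriorAlgebra ℝ (EuclideanSpace ℝ (Fin n)) :=
    ExteriorAlgebra.ιMulti ℝ q (fun i => s i x) with hW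
  have hWne : W ≠ 0 := by
    intro h; exact hχx0 (by rw [hχx, h, smul_zero])
  haveI : NoZeroSMulDivisors ℝ (ExteriorAlgebra ℝ (EuclideanSpace ℝ (Fin n))) :=
    GroupWithZero.toNoZeroSMulDivisors
  have hbindep : LinearIndependent ℝ (fun i => s i x) := by
    by_contra hdep
    exact hWne (AlternatingMap.map_linearDependent _ _ hdep)
  -- the differential of the orbit map at `1`
  set T : EuclideanSpace ℝ (Fin p) →L[ℝ] EuclideanSpace ℝ (Fin n) := mfderiv (𝓡 p) (𝓡 n) (fun g : G => g • x) (1 : G) with hT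
  have hF : ContMDiff (𝓡 p) (𝓡 n) (⊤ : ℕ∞) (fun g : G => g • x) :=
    hact.smooth.comp (contMDiff_id.prodMk contMDiff_const)
  -- the vertical space at `x`
  have hVeq : vertSp (n := n) (m := m) π x = LinearMap.range T.toLinearMap := hreg.vert_eq x
  have hdim : Module.finrank ℝ (vertSp (n := n) (m := m) π x) = q := by
    rw [hVeq, hT]; exact horb x
  have hmem : ∀ i, s i x ∈ vertSp (n := n) (m := m) π x := fun i => hsvert i x hxV
  have hb'indep : LinearIndependent ℝ
      (fun i => (⟨s i x, hmem i⟩ : vertSp (n := n) (m := m) π x)) :=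
    hbindep.of_comp (vertSp (n := n) (m := m) π x).subtype
  let B : Module.Basis (Fin q) ℝ (vertSp (n := n) (m := m) π x) :=
    basisOfLinearIndependentOfCardEqFinrank hb'indep (by simp [hdim])
  have hB : ∀ i : Fin q, (B i : EuclideanSpace ℝ (Fin n)) = s i x := by
    intro i
    rw [show B = basisOfLinearIndependentOfCardEqFinrank hb'indep (by simp [hdim]) from rfl,
      coe_basisOfLinearIndependentOfCardEqFinrank]
  have hBW : ExteriorAlgebra.ιMulti ℝ q (fun i => (B i : EuclideanSpace ℝ (Fin n))) = W := by
    rw [hW]; congr 1; exact funext hB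
  -- a dual functional not vanishing on `W`
  obtain ⟨φ, hφ⟩ : ∃ φ : Module.Dual ℝ (ExteriorAlgebra ℝ (EuclideanSpace ℝ (Fin n))),
      φ W ≠ 0 := by
    by_contra h
    push_neg at h
    exact hWne ((Module.forall_dual_apply_eq_zero_iff ℝ W).1 h)
  -- the candidate relative form
  let β : (EuclideanSpace ℝ (Fin p)) [⋀^Fin q]→ₗ[ℝ] ℝ :=
    φ.compAlternatingMap
      ((ExteriorAlgebra.ιMulti ℝ q).compLinearMap T.toLinearMap)
  have hβ : ∀ w : Fin q → EuclideanSpace ℝ (Fin p),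
      β w = φ (ExteriorAlgebra.ιMulti ℝ q (fun i => T (w i))) := fun w => rfl
  refine ⟨⇑β, ⟨⟨β, rfl⟩, ?_, ?_⟩, ?_⟩
  · -- annihilated by insertion of the Lie algebra of the stabilizer
    rintro v ⟨γ, hγ, hγ0, hγstab, hγv⟩ w ⟨i, hi⟩
    have hTv : T v = 0 := by
      have hd5 : HasMFDerivAt 𝓘(ℝ, ℝ) (𝓡 p) γ 0 (mfderiv 𝓘(ℝ, ℝ) (𝓡 p) γ 0) :=
        (hγ.mdifferentiableAt (by simp)).hasMFDerivAt
      have hd6 : HasMFDerivAt (𝓡 p) (𝓡 n) (fun g : G => g • x) (γ 0) T := by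
        rw [hγ0]; exact (hF.mdifferentiableAt (by simp)).hasMFDerivAt
      have hc7 : HasMFDerivAt 𝓘(ℝ, ℝ) (𝓡 n) ((fun g : G => g • x) ∘ γ) 0
          (T.comp (mfderiv 𝓘(ℝ, ℝ) (𝓡 p) γ 0)) := HasMFDerivAt.comp 0 hd6 hd5
      have hconst : ((fun g : G => g • x) ∘ γ) = fun _ : ℝ => x :=
        funext fun t => MulAction.mem_stabilizer_iff.mp (hγstab t)
      rw [hconst] at hc7
      have h8 : T.comp (mfderiv 𝓘(ℝ, ℝ) (𝓡 p) γ 0) = 0 :=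
        hc7.mfderiv.symm.trans (mfderiv_const (I := 𝓘(ℝ, ℝ)) (I' := 𝓡 n))
      have h9 := DFunLike.congr_fun h8 (1 : ℝ)
      rw [← hγv]
      exact h9
    simp only [hβ]
    have h5 : (fun j => T (w j)) i = 0 := by simp only [hi, hTv]
    rw [AlternatingMap.map_coord_zero _ i h5, map_zero]
  · -- invariance under the coadjoint action of the stabilizer
    intro g hg w
    have hgx : g • x = x := MulAction.mem_stabilizer_iff.mp hg
    have hginvx : g⁻¹ • x = x := by
      conv_lhs => rw [← hgx]
      rw [inv_smul_smul]
    have hconj : ContMDiff (𝓡 p) (𝓡 p) (⊤ : ℕ∞) (fun z : G => g * z * g⁻¹) :=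
      (contMDiff_const.mul contMDiff_id).mul contMDiff_const
    have hgact : ContMDiff (𝓡 n) (𝓡 n) (⊤ : ℕ∞) (fun y : M => g • y) :=
      hact.smooth.comp (contMDiff_const.prodMk contMDiff_id)
    have key : ∀ u : EuclideanSpace ℝ (Fin p), T (AdAct G g u) = dAct G g x (T u) := by
      intro u
      have hfe : ((fun h : G => h • x) ∘ fun z : G => g * z * g⁻¹)
          = ((fun y : M => g • y) ∘ fun h : G => h • x) := by
        funext z
        simp only [Function.comp_apply, mul_smul, hginvx]
      have hd2 : HasMFDerivAt (𝓡 p) (𝓡 p) (fun z : G => g * z * g⁻¹) (1 : G)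
          (AdAct G g) := (hconj.mdifferentiableAt (by simp)).hasMFDerivAt
      have hd3 : HasMFDerivAt (𝓡 p) (𝓡 n) (fun h : G => h • x) (1 : G) T :=
        (hF.mdifferentiableAt (by simp)).hasMFDerivAt
      have hd1 : HasMFDerivAt (𝓡 p) (𝓡 n) (fun h : G => h • x)
          ((fun z : G => g * z * g⁻¹) 1) T := by
        rw [show (fun z : G => g * z * g⁻¹) 1 = 1 by simp]; exact hd3
      have hcA : HasMFDerivAt (𝓡 p) (𝓡 n)
          ((fun h : G => h • x) ∘ fun z : G => g * z * g⁻¹) 1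
          (T.comp (AdAct G g)) := HasMFDerivAt.comp 1 hd1 hd2
      have hd4' : HasMFDerivAt (𝓡 n) (𝓡 n) (fun y : M => g • y)
          ((fun h : G => h • x) 1)
          (mfderiv (𝓡 n) (𝓡 n) (fun y : M => g • y) ((fun h : G => h • x) 1)) :=
        (hgact.mdifferentiableAt (by simp)).hasMFDerivAt
      have hcB : HasMFDerivAt (𝓡 p) (𝓡 n)
          ((fun y : M => g • y) ∘ fun h : G => h • x) 1
          ((mfderiv (𝓡 n) (𝓡 n) (fun y : M => g • y) ((fun h : G => h • x) 1)).comp T) :=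
        HasMFDerivAt.comp 1 hd4' hd3
      rw [hfe] at hcA
      have huniq := hcA.mfderiv.symm.trans hcB.mfderiv
      have hpt : (mfderiv (𝓡 n) (𝓡 n) (fun y : M => g • y) ((fun h : G => h • x) 1) :
          EuclideanSpace ℝ (Fin n) →L[ℝ] EuclideanSpace ℝ (Fin n)) = dAct G g x := by
        rw [show (fun h : G => h • x) 1 = x from one_smul G x]
        rfl
      have h6 := DFunLike.congr_fun huniq u
      rw [← hpt]
      exact h6
    simp only [hβ]
    have h7 : (fun i => T (AdAct G g (w i)))
        = (dAct G g x).toLinearMap ∘ fun i => T (w i) :=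
      funext fun i => key (w i)
    rw [h7, ← ExteriorAlgebra.map_apply_ιMulti]
    obtain ⟨c, hc⟩ := top_wedge_aux (vertSp (n := n) (m := m) π x) B (fun i => T (w i))
      (fun i => by rw [hVeq]; exact LinearMap.mem_range_self _ (w i))
    rw [hBW] at hc
    have hmapW : ExteriorAlgebra.map (dAct (n := n) G g x).toLinearMap W = W := by
      have h9 := hχinv g x (Set.mem_univ x)
      rw [hgx, hχx, map_smul] at h9
      exact smul_right_injective _ hJx h9
    rw [hc, map_smul, hmapW]
  · -- the form is nonzero
    intro hcontra
    have hwex : ∀ i : Fin q, ∃ u : EuclideanSpace ℝ (Fin p), T u = s i x := by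
      intro i
      have hm : s i x ∈ LinearMap.range T.toLinearMap := by rw [← hVeq]; exact hmem i
      exact LinearMap.mem_range.mp hm
    choose w hw using hwex
    have hβw : β w = φ W := by
      rw [hβ]; congr 1; rw [hW]; congr 1; exact funext hw
    have h0 := congrFun hcontra w
    rw [hβw] at h0
    exact hφ h0

end GInvariant
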